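/- Let δ ∈ [0,1]. Pose Assumption (A). Let μ be a nonnegative measure on ℋ, π a probability density function with respect to μ, (a_k)_{k≥1} a decreasing sequence of positive reals converging to zero, and (γ_k)_{k≥1} nonnegative weights with Σ_k γ_k ≤ 1. Define the level function Δ by Δ(h,s) = min(δ·π(h)·a_k·γ_k, 1) whenever s ∈ [a_k, a_{k-1}) (with a_0 = +∞), and Δ(h,0)=0. Then for any algorithm X ↦ A_X ⊆ ℋ with (X,h) ↦ 1{h ∈ A_X} bimeasurable, the expectation over X ~ P of the false prediction rate ρ_Δ(X, A_X) is at most δ. -/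

import Mathlib

open MeasureTheory Filter
open scoped Classical ENNReal Topology

/-!
Whenever `Δ(·, μ (A x))` is the `k`-th naive level `Δₖ` we have `μ (A x) ≥ a k`, and the false
predictions inside `A x` lie in the slice `{h | x ∈ B h (Δₖ h)}`; hence
`ρ_Δ(x, A x) ≤ ∑ₖ μ(slice)/a k`.
By Tonelli the `P`-expectation of `μ(slice)` is at most `∫ Δₖ dμ ≤ δ a k γ k`, and summing
gives `δ ∑ γ k ≤ δ`. Tonelli needs σ-finiteness, which `μ` gains when restricted to `{π > 0}`
(by Markov, each `{π ≥ 1/n}` has finite measure), and that restriction loses nothing since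
`B h 0 = ∅` puts every slice inside `{π > 0}`.
-/

theorem MeasureTheory.Measure.sigmaFinite_restrict_setOf_pos {α : Type*} [MeasurableSpace α]
    {μ : Measure α} {f : α → ℝ≥0∞} (hf : Measurable f) (hf_int : ∫⁻ x, f x ∂μ ≠ ∞) :
    SigmaFinite (μ.restrict {x | 0 < f x}) := by
  refine Measure.sigmaFinite_of_countable (S := insert {x | f x = 0}
    (Set.range fun n : ℕ => {x | ((n + 1 : ℕ) : ℝ≥0∞)⁻¹ ≤ f x}))
    ((Set.countable_range _).insert _) ?_ ?_
  · rintro s (rfl | ⟨n, rfl⟩)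
    · rw [Measure.restrict_apply (measurableSet_eq_fun hf measurable_const)]
      simp [pos_iff_ne_zero, ← Set.ofPred_and]
    · calc μ.restrict {x | 0 < f x} {x | ((n + 1 : ℕ) : ℝ≥0∞)⁻¹ ≤ f x}
          ≤ μ {x | ((n + 1 : ℕ) : ℝ≥0∞)⁻¹ ≤ f x} := Measure.restrict_apply_le _ _
        _ ≤ (∫⁻ x, f x ∂μ) / ((n + 1 : ℕ) : ℝ≥0∞)⁻¹ :=
          meas_ge_le_lintegral_div hf.aemeasurable (by simp) (by simp)
        _ < ∞ := ENNReal.div_lt_top hf_int (by simp)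
  · refine Set.eq_univ_of_forall fun x => ?_
    rcases eq_or_ne (f x) 0 with hx | hx
    · exact ⟨_, Set.mem_insert _ _, hx⟩
    · obtain ⟨n, hn⟩ := ENNReal.exists_inv_nat_lt hx
      exact ⟨_, Set.mem_insert_of_mem _ ⟨n, rfl⟩,
        (ENNReal.inv_le_inv.2 (by simp)).trans hn.le⟩

theorem exists_mem_Ico_succ_of_tendsto_zero {a : ℕ → ℝ} (ha : Tendsto a atTop (𝓝 0))
    {s : ℝ} (hs : 0 < s) (hs_lt : s < a 0) : ∃ k, s ∈ Set.Ico (a (k + 1)) (a k) := by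
  have hex : ∃ n, a n ≤ s := (ha.eventually (gt_mem_nhds hs)).exists.imp fun _ => le_of_lt
  obtain ⟨k, hk⟩ : ∃ k, Nat.find hex = k + 1 :=
    Nat.exists_eq_succ_of_ne_zero fun h0 => (Nat.find_spec hex).not_gt (h0 ▸ hs_lt)
  exact ⟨k, hk ▸ Nat.find_spec hex, lt_of_not_ge (Nat.find_min hex (by omega))⟩

section OccamHammer

variable {𝒳 H : Type*} {B : H → ℝ → Set 𝒳}

noncomputable def falsePredictionRate [MeasurableSpace H] (μ : Measure H) (B : H → ℝ → Set 𝒳)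
    (Δ : H → ℝ → ℝ) (x : 𝒳) (A : Set H) : ℝ≥0∞ :=
  if μ A = 0 ∨ μ A = ⊤ then 0 else μ (A ∩ {h : H | x ∈ B h (Δ h (μ A).toReal)}) / μ A

theorem falsePredictionRate_le_tsum [MeasurableSpace H] {μ : Measure H} {Δ : H → ℝ → ℝ}
    {Δk : ℕ → H → ℝ} {a : ℕ → ℝ} (hΔ : ∀ s, 0 < s → ∃ k, a k ≤ s ∧ ∀ h, Δ h s = Δk k h)
    (x : 𝒳) (A : Set H) :
    falsePredictionRate μ B Δ x A ≤ ∑' k, μ {h | x ∈ B h (Δk k h)} / ENNReal.ofReal (a k) := by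
  unfold falsePredictionRate
  split_ifs with hA
  · exact zero_le
  obtain ⟨hA0, hAtop⟩ := not_or.1 hA
  obtain ⟨k, hk_le, hk⟩ := hΔ _ (ENNReal.toReal_pos hA0 hAtop)
  calc μ (A ∩ {h | x ∈ B h (Δ h (μ A).toReal)}) / μ A
      ≤ μ {h | x ∈ B h (Δk k h)} / ENNReal.ofReal (a k) := by
        refine ENNReal.div_le_div (measure_mono fun h hh => ?_) ?_
        · simpa [hk] using hh.2
        · simpa [ENNReal.ofReal_toReal hAtop] using ENNReal.ofReal_le_ofReal hk_le
    _ ≤ _ := ENNReal.le_tsum k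

theorem measurableSet_setOf_mem_level [MeasurableSpace 𝒳] [MeasurableSpace H]
    (hB : MeasurableSet {p : 𝒳 × H × ℝ | p.1 ∈ B p.2.1 p.2.2})
    {g : H → ℝ} (hg : Measurable g) : MeasurableSet {p : 𝒳 × H | p.1 ∈ B p.2 (g p.2)} :=
  hB.preimage (measurable_fst.prodMk (measurable_snd.prodMk (hg.comp measurable_snd)))

theorem measurable_measure_setOf_mem_level [MeasurableSpace 𝒳] [MeasurableSpace H]
    {ν : Measure H} [SFinite ν] (hB : MeasurableSet {p : 𝒳 × H × ℝ | p.1 ∈ B p.2.1 p.2.2})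
    {g : H → ℝ} (hg : Measurable g) :
    Measurable fun x => ν {h | x ∈ B h (g h)} :=
  measurable_measure_prodMk_left (measurableSet_setOf_mem_level hB hg)

theorem lintegral_measure_setOf_mem_level_le [MeasurableSpace 𝒳] [MeasurableSpace H]
    {P : Measure 𝒳} [SFinite P] {ν : Measure H} [SFinite ν]
    (hBprob : ∀ (h : H) (t : ℝ), 0 ≤ t → t ≤ 1 → P (B h t) ≤ ENNReal.ofReal t)
    (hB : MeasurableSet {p : 𝒳 × H × ℝ | p.1 ∈ B p.2.1 p.2.2}) {g : H → ℝ} (hg : Measurable g)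
    (hg0 : ∀ h, 0 ≤ g h) (hg1 : ∀ h, g h ≤ 1) :
    ∫⁻ x, ν {h | x ∈ B h (g h)} ∂P ≤ ∫⁻ h, ENNReal.ofReal (g h) ∂ν := by
  have hE := measurableSet_setOf_mem_level hB hg
  calc ∫⁻ x, ν {h | x ∈ B h (g h)} ∂P = P.prod ν {p : 𝒳 × H | p.1 ∈ B p.2 (g p.2)} :=
        (Measure.prod_apply hE).symm
    _ = ∫⁻ h, P (B h (g h)) ∂ν := Measure.prod_apply_symm hE
    _ ≤ ∫⁻ h, ENNReal.ofReal (g h) ∂ν :=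
        lintegral_mono fun h => hBprob h _ (hg0 h) (hg1 h)

variable {δ : ℝ} {π : H → ℝ} {a γ : ℕ → ℝ}

def naiveLevel (δ : ℝ) (π : H → ℝ) (a γ : ℕ → ℝ) (k : ℕ) (h : H) : ℝ :=
  min (δ * π h * (a k * γ k)) 1

theorem naiveLevel_nonneg (hδ : 0 ≤ δ) (hπ : ∀ h, 0 ≤ π h) (ha : ∀ k, 0 < a k)
    (hγ : ∀ k, 0 ≤ γ k) (k : ℕ) (h : H) : 0 ≤ naiveLevel δ π a γ k h :=
  le_min (by have := hπ h; have := ha k; have := hγ k; positivity) zero_le_one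

theorem naiveLevel_le_one (k : ℕ) (h : H) : naiveLevel δ π a γ k h ≤ 1 := min_le_right _ _

theorem measurable_naiveLevel [MeasurableSpace H] (hπ : Measurable π) (k : ℕ) :
    Measurable (naiveLevel δ π a γ k) :=
  ((measurable_const.mul hπ).mul_const _).min measurable_const

theorem exists_level_eq_naiveLevel {Δ : H → ℝ → ℝ} (ha : Tendsto a atTop (𝓝 0))
    (hΔtop : ∀ h s, a 0 ≤ s → Δ h s = min (δ * π h * (a 0 * γ 0)) 1)
    (hΔk : ∀ h s k, a (k + 1) ≤ s → s < a k →
      Δ h s = min (δ * π h * (a (k + 1) * γ (k + 1))) 1)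
    {s : ℝ} (hs : 0 < s) : ∃ k, a k ≤ s ∧ ∀ h, Δ h s = naiveLevel δ π a γ k h := by
  rcases le_or_gt (a 0) s with hs0 | hs0
  · exact ⟨0, hs0, fun h => hΔtop h s hs0⟩
  · obtain ⟨k, hk_le, hk_lt⟩ := exists_mem_Ico_succ_of_tendsto_zero ha hs hs0
    exact ⟨k + 1, hk_le, fun h => hΔk h s k hk_le hk_lt⟩

theorem setOf_mem_naiveLevel_subset (hB0 : ∀ h, B h 0 = ∅) (hπ : ∀ h, 0 ≤ π h) (x : 𝒳)
    (k : ℕ) : {h | x ∈ B h (naiveLevel δ π a γ k h)} ⊆ {h | 0 < π h} := by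
  intro h hh
  by_contra hπh
  have hπ0 : π h = 0 := le_antisymm (not_lt.1 hπh) (hπ h)
  simp [naiveLevel, hπ0, hB0] at hh

theorem lintegral_measure_setOf_mem_naiveLevel_le [MeasurableSpace 𝒳] [MeasurableSpace H]
    {P : Measure 𝒳} [SFinite P] {μ ν : Measure H} [SFinite ν] (hνμ : ν ≤ μ)
    (hBprob : ∀ (h : H) (t : ℝ), 0 ≤ t → t ≤ 1 → P (B h t) ≤ ENNReal.ofReal t)
    (hB : MeasurableSet {p : 𝒳 × H × ℝ | p.1 ∈ B p.2.1 p.2.2})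
    (hδ : 0 ≤ δ) (hπmeas : Measurable π) (hπ : ∀ h, 0 ≤ π h)
    (hπdens : ∫⁻ h, ENNReal.ofReal (π h) ∂μ = 1) (ha : ∀ k, 0 < a k) (hγ : ∀ k, 0 ≤ γ k)
    (k : ℕ) :
    ∫⁻ x, ν {h | x ∈ B h (naiveLevel δ π a γ k h)} ∂P ≤ ENNReal.ofReal (δ * (a k * γ k)) := by
  have hc : 0 ≤ δ * (a k * γ k) := by have := ha k; have := hγ k; positivity
  calc _ ≤ ∫⁻ h, ENNReal.ofReal (naiveLevel δ π a γ k h) ∂ν :=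
        lintegral_measure_setOf_mem_level_le hBprob hB (measurable_naiveLevel hπmeas k)
          (naiveLevel_nonneg hδ hπ ha hγ k) (naiveLevel_le_one k)
    _ ≤ ∫⁻ h, ENNReal.ofReal (δ * (a k * γ k)) * ENNReal.ofReal (π h) ∂μ := by
        refine lintegral_mono' hνμ fun h => ?_
        rw [← ENNReal.ofReal_mul hc]
        exact ENNReal.ofReal_le_ofReal ((min_le_left _ _).trans_eq (by ring))
    _ = ENNReal.ofReal (δ * (a k * γ k)) := by
        rw [lintegral_const_mul' _ _ ENNReal.ofReal_ne_top, hπdens, mul_one]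

theorem lintegral_measure_setOf_mem_naiveLevel_div_le [MeasurableSpace 𝒳] [MeasurableSpace H]
    {P : Measure 𝒳} [SFinite P] {μ ν : Measure H} [SFinite ν] (hνμ : ν ≤ μ)
    (hBprob : ∀ (h : H) (t : ℝ), 0 ≤ t → t ≤ 1 → P (B h t) ≤ ENNReal.ofReal t)
    (hB : MeasurableSet {p : 𝒳 × H × ℝ | p.1 ∈ B p.2.1 p.2.2})
    (hδ : 0 ≤ δ) (hπmeas : Measurable π) (hπ : ∀ h, 0 ≤ π h)
    (hπdens : ∫⁻ h, ENNReal.ofReal (π h) ∂μ = 1) (ha : ∀ k, 0 < a k) (hγ : ∀ k, 0 ≤ γ k)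
    (k : ℕ) :
    ∫⁻ x, ν {h | x ∈ B h (naiveLevel δ π a γ k h)} / ENNReal.ofReal (a k) ∂P
      ≤ ENNReal.ofReal δ * ENNReal.ofReal (γ k) := by
  simp_rw [div_eq_mul_inv]
  rw [lintegral_mul_const' _ _ (ENNReal.inv_ne_top.2 (ENNReal.ofReal_pos.2 (ha k)).ne'),
    ← div_eq_mul_inv, ← ENNReal.ofReal_mul hδ]
  calc _ ≤ ENNReal.ofReal (δ * (a k * γ k)) / ENNReal.ofReal (a k) := by
        gcongr
        exact lintegral_measure_setOf_mem_naiveLevel_le hνμ hBprob hB hδ hπmeas hπ hπdens ha hγ k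
    _ = ENNReal.ofReal (δ * γ k) := by
        rw [← ENNReal.ofReal_div_of_pos (ha k)]
        congr 1
        field_simp [(ha k).ne']

end OccamHammer

theorem occam_hammer_naive_discretization_general
    {𝒳 : Type*} [MeasurableSpace 𝒳] {H : Type*} [MeasurableSpace H]
    (P : Measure 𝒳) [IsProbabilityMeasure P]
    (B : H → ℝ → Set 𝒳)
    (hBprob : ∀ (h : H) (t : ℝ), 0 ≤ t → t ≤ 1 → P (B h t) ≤ ENNReal.ofReal t)
    (hBmeas : MeasurableSet {p : 𝒳 × H × ℝ | p.1 ∈ B p.2.1 p.2.2})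
    (hB0 : ∀ h : H, B h 0 = ∅)
    (δ : ℝ) (hδ0 : 0 ≤ δ)
    (μ : Measure H)
    (π : H → ℝ) (hπmeas : Measurable π) (hπnn : ∀ h, 0 ≤ π h)
    (hπdens : ∫⁻ h, ENNReal.ofReal (π h) ∂μ = 1)
    (a : ℕ → ℝ) (ha_pos : ∀ k, 0 < a k)
    (ha_lim : Tendsto a atTop (𝓝 0))
    (γ : ℕ → ℝ) (hγnn : ∀ k, 0 ≤ γ k)
    (hγsum : ∑' k, ENNReal.ofReal (γ k) ≤ 1)
    (Δ : H → ℝ → ℝ)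
    (hΔtop : ∀ h s, a 0 ≤ s → Δ h s = min (δ * π h * (a 0 * γ 0)) 1)
    (hΔk : ∀ h s k, a (k + 1) ≤ s → s < a k →
      Δ h s = min (δ * π h * (a (k + 1) * γ (k + 1))) 1)
    (A : 𝒳 → Set H) :
    ∫⁻ x, (if μ (A x) = 0 ∨ μ (A x) = ⊤ then 0
        else μ (A x ∩ {h : H | x ∈ B h (Δ h ((μ (A x)).toReal))}) / μ (A x)) ∂P
      ≤ ENNReal.ofReal δ := by
  set ν := μ.restrict {h | 0 < π h}
  have : SigmaFinite ν := by
    simpa only [ENNReal.ofReal_pos] using Measure.sigmaFinite_restrict_setOf_pos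
      hπmeas.ennreal_ofReal (hπdens ▸ ENNReal.one_ne_top)
  have hrate : ∀ x, falsePredictionRate μ B Δ x (A x)
      ≤ ∑' k, ν {h | x ∈ B h (naiveLevel δ π a γ k h)} / ENNReal.ofReal (a k) := fun x => by
    simp_rw [ν, Measure.restrict_eq_self μ (setOf_mem_naiveLevel_subset hB0 hπnn x _)]
    exact falsePredictionRate_le_tsum
      (fun _ hs => exists_level_eq_naiveLevel ha_lim hΔtop hΔk hs) x (A x)
  calc ∫⁻ x, falsePredictionRate μ B Δ x (A x) ∂P
      ≤ ∫⁻ x, ∑' k, ν {h | x ∈ B h (naiveLevel δ π a γ k h)} / ENNReal.ofReal (a k) ∂P :=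
        lintegral_mono hrate
    _ = ∑' k, ∫⁻ x, ν {h | x ∈ B h (naiveLevel δ π a γ k h)} / ENNReal.ofReal (a k) ∂P :=
        lintegral_tsum fun k => ((measurable_measure_setOf_mem_level hBmeas
          (measurable_naiveLevel hπmeas k)).div_const _).aemeasurable
    _ ≤ ∑' k, ENNReal.ofReal δ * ENNReal.ofReal (γ k) := ENNReal.tsum_le_tsum fun k =>
        lintegral_measure_setOf_mem_naiveLevel_div_le Measure.restrict_le_self hBprob hBmeas hδ0
          hπmeas hπnn hπdens ha_pos hγnn k
    _ = ENNReal.ofReal δ * ∑' k, ENNReal.ofReal (γ k) := ENNReal.tsum_mul_left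
    _ ≤ ENNReal.ofReal δ := mul_le_of_le_one_right' hγsum

/-- **The "naive" discretization strategy.**
Pose Assumption (A). Let `μ` be a volume measure on the pool `H`, `π` a probability density
w.r.t. `μ`, `a k` (for `k = 0, 1, …`, standing for the paper's `a_1, a_2, …`, with the
convention `a_0 = +∞`) a decreasing sequence of positive reals converging to `0`, and
`γ k` nonnegative weights of total mass at most `1`. Let `Δ` be the (jointly measurable)
level function with `Δ(h,s) = min(δ·π(h)·a_k·γ_k, 1)` whenever `s ∈ [a_k, a_{k-1})` and
`Δ(h,s) = 0` for `s ≤ 0`. Then for any algorithm `x ↦ A x` returning a (bimeasurable)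
subset of `H`, the expected false prediction rate
`ρ_Δ(x, A x) = μ(A x ∩ {h | x ∈ B(h, Δ(h, |A x|))}) / μ(A x)` (set to `0` when
`μ (A x)` is `0` or `∞`) is at most `δ`. -/
theorem occam_hammer_naive_discretization
    {𝒳 : Type*} [MeasurableSpace 𝒳] {H : Type*} [MeasurableSpace H]
    (P : Measure 𝒳) [IsProbabilityMeasure P]
    (B : H → ℝ → Set 𝒳)
    (hBprob : ∀ (h : H) (t : ℝ), 0 ≤ t → t ≤ 1 → P (B h t) ≤ ENNReal.ofReal t)
    (hBmeas : MeasurableSet {p : 𝒳 × H × ℝ | p.1 ∈ B p.2.1 p.2.2})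
    (hB0 : ∀ h : H, B h 0 = ∅)
    (δ : ℝ) (hδ0 : 0 ≤ δ) (hδ1 : δ ≤ 1)
    (μ : Measure H)
    (π : H → ℝ) (hπmeas : Measurable π) (hπnn : ∀ h, 0 ≤ π h)
    (hπdens : ∫⁻ h, ENNReal.ofReal (π h) ∂μ = 1)
    (a : ℕ → ℝ) (ha_pos : ∀ k, 0 < a k) (ha_anti : StrictAnti a)
    (ha_lim : Tendsto a atTop (𝓝 0))
    (γ : ℕ → ℝ) (hγnn : ∀ k, 0 ≤ γ k)
    (hγsum : ∑' k, ENNReal.ofReal (γ k) ≤ 1)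
    (Δ : H → ℝ → ℝ) (hΔmeas : Measurable (Function.uncurry Δ))
    (hΔrange : ∀ h s, 0 ≤ Δ h s ∧ Δ h s ≤ 1)
    (hΔtop : ∀ h s, a 0 ≤ s → Δ h s = min (δ * π h * (a 0 * γ 0)) 1)
    (hΔk : ∀ h s k, a (k + 1) ≤ s → s < a k →
      Δ h s = min (δ * π h * (a (k + 1) * γ (k + 1))) 1)
    (hΔ0 : ∀ h s, s ≤ 0 → Δ h s = 0)
    (A : 𝒳 → Set H) (hAmeas : MeasurableSet {p : 𝒳 × H | p.2 ∈ A p.1}) :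
    ∫⁻ x, (if μ (A x) = 0 ∨ μ (A x) = ⊤ then 0
        else μ (A x ∩ {h : H | x ∈ B h (Δ h ((μ (A x)).toReal))}) / μ (A x)) ∂P
      ≤ ENNReal.ofReal δ :=
  occam_hammer_naive_discretization_general P B hBprob hBmeas hB0 δ hδ0 μ π hπmeas hπnn hπdens a
    ha_pos ha_lim γ hγnn hγsum Δ hΔtop hΔk A
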